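/- Column strict shifted plane partitions of class l-1 with at most n parts in the first row are in bijection with families of nonintersecting lattice paths (with unit horizontal steps (-1,0) and unit vertical steps (0,1)) whose starting points form a subset S of {(i,0) : 0 ≤ i ≤ n-1} and whose endpoints form the corresponding subset of {(0, i+l-1) : 0 ≤ i ≤ n-1}, i.e., (i,0) ∈ S if and only if (0, i+l-1) is an endpoint. -/

import Mathlib

/-!
Index the rows of the partition by their lengths. A row of length `i + 1` is a sequence
`c + i + 1 = a 0 ≥ a 1 ≥ ⋯ ≥ a i ≥ 1`, read as the lattice path from `(i, 0)` to `(0, c + i)`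
that climbs column `x` up to height `a x - 1` before stepping left; conversely a path is
determined by the heights at which it leaves its columns. Column strictness of the shifted
diagram propagates from adjacent rows to any two rows of lengths `i + 1 < j + 1`, as
`a k < a' (k + 1)`, and this says exactly that in every column the shorter path stays below the
longer one, i.e. that the two paths are disjoint.
-/
/-- A column strict shifted plane partition of class `c` with at most `n` parts in the first
row (rows `0, …, rows-1`; row `i` indented `i` cells; parts positive, weakly decreasing along
rows, strictly decreasing down columns; row lengths strictly decreasing; first part of each row
equals `c` plus its row length; functions normalised to `0` outside the diagram). -/
structure CSSPP (c n : ℕ) where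
  rows : ℕ
  len : ℕ → ℕ
  part : ℕ → ℕ → ℕ
  len_strict : ∀ i, i + 1 < rows → len (i + 1) < len i
  len_pos : ∀ i, i < rows → 0 < len i
  first_row_le : 0 < rows → len 0 ≤ n
  part_pos : ∀ i j, i < rows → j < len i → 0 < part i j
  row_weak_dec : ∀ i j, i < rows → j + 1 < len i → part i (j + 1) ≤ part i j
  col_strict_dec : ∀ i j, i + 1 < rows → j < len (i + 1) → part (i + 1) j < part i (j + 1)
  class_eq : ∀ i, i < rows → part i 0 = c + len i
  len_eq_zero : ∀ i, rows ≤ i → len i = 0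
  part_eq_zero : ∀ i j, ¬(i < rows ∧ j < len i) → part i j = 0

/-- A lattice step: from `a` move one unit left `(-1,0)` or one unit up `(0,1)`. -/
def LatticeStep (a b : ℤ × ℤ) : Prop :=
  b = (a.1 - 1, a.2) ∨ b = (a.1, a.2 + 1)

/-- A family of nonintersecting lattice paths with unit steps `(-1,0)` and `(0,1)`:
for each `i` in a subset `S ⊆ {0,…,n-1}` there is a path (a nonempty list of lattice points)
from the starting point `(i, 0)` to the endpoint `(0, i+l-1)`, and distinct paths share no
lattice point. -/
structure NILP (n l : ℕ) where
  S : Finset (Fin n)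
  path : Fin n → List (ℤ × ℤ)
  path_nil : ∀ i, i ∉ S → path i = []
  steps : ∀ i ∈ S, List.Chain' LatticeStep (path i)
  head_eq : ∀ i ∈ S, (path i).head? = some ((i : ℤ), 0)
  last_eq : ∀ i ∈ S, (path i).getLast? = some (0, (i : ℤ) + l - 1)
  nonintersecting : ∀ i ∈ S, ∀ j ∈ S, i ≠ j → ∀ p, p ∈ path i → p ∉ path j

attribute [ext] CSSPP NILP

open Set

section ColumnPath

def columnSegment (x lo cnt : ℕ) : List (ℤ × ℤ) :=
  (List.range' lo cnt).map fun y : ℕ => ((x : ℤ), (y : ℤ))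

theorem columnSegment_succ (x lo cnt : ℕ) :
    columnSegment x lo (cnt + 1) = ((x : ℤ), (lo : ℤ)) :: columnSegment x (lo + 1) cnt := by
  simp [columnSegment, List.range'_succ]

theorem mem_columnSegment {x lo cnt : ℕ} {p : ℤ × ℤ} :
    p ∈ columnSegment x lo cnt ↔ ∃ y : ℕ, p = ((x : ℤ), (y : ℤ)) ∧ lo ≤ y ∧ y < lo + cnt := by
  simp only [columnSegment, List.mem_map, List.mem_range'_1]
  constructor
  · rintro ⟨y, hy, rfl⟩
    exact ⟨y, rfl, hy⟩
  · rintro ⟨y, rfl, hy⟩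
    exact ⟨y, hy, rfl⟩

theorem getLast?_columnSegment {x lo cnt : ℕ} (h : 0 < cnt) :
    (columnSegment x lo cnt).getLast? = some ((x : ℤ), ((lo + cnt - 1 : ℕ) : ℤ)) := by
  simp [columnSegment, List.getLast?_map, List.getLast?_range', h.ne']

theorem isChain_columnSegment (x lo cnt : ℕ) :
    (columnSegment x lo cnt).IsChain LatticeStep := by
  rw [columnSegment, List.isChain_map]
  refine (List.isChain_range' lo cnt 1).imp fun y y' h => Or.inr ?_
  simp [h]

variable {a a' : ℕ → ℕ}

/-- The lattice path that starts at `(s, b)` and, for `x = s, s - 1, …, 0` in turn, climbs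
column `x` up to height `a x - 1` and then steps left. -/
def columnPath (a : ℕ → ℕ) : ℕ → ℕ → List (ℤ × ℤ)
  | 0, b => columnSegment 0 b (a 0 - b)
  | s + 1, b => columnSegment (s + 1) b (a (s + 1) - b) ++ columnPath a s (a (s + 1) - 1)

theorem columnPath_congr {s : ℕ} (h : ∀ k ≤ s, a k = a' k) (b : ℕ) :
    columnPath a s b = columnPath a' s b := by
  induction s generalizing b with
  | zero => simp only [columnPath, h 0 le_rfl]
  | succ s ih =>
    simp only [columnPath, h (s + 1) le_rfl, ih fun k hk => h k (by omega)]

theorem columnPath_eq_cons_of_lt {s b : ℕ} (h : b + 1 < a s) :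
    columnPath a s b = ((s : ℤ), (b : ℤ)) :: columnPath a s (b + 1) := by
  have hcnt : a s - b = a s - (b + 1) + 1 := by omega
  cases s <;> simp only [columnPath, hcnt, columnSegment_succ, List.cons_append, Nat.cast_zero]

theorem columnPath_succ_eq_cons_of_eq {s b : ℕ} (h : a (s + 1) = b + 1) :
    columnPath a (s + 1) b = (((s + 1 : ℕ) : ℤ), (b : ℤ)) :: columnPath a s b := by
  simp [columnPath, h, columnSegment]

theorem columnPath_zero_of_eq {b : ℕ} (h : a 0 = b + 1) :
    columnPath a 0 b = [((0 : ℤ), (b : ℤ))] := by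
  simp [columnPath, h, columnSegment]

theorem sub_one_lt_of_antitoneOn {s b : ℕ} (ha : AntitoneOn a (Iic (s + 1)))
    (hb : b < a (s + 1)) : a (s + 1) - 1 < a s := by
  have : a (s + 1) ≤ a s := ha (mem_Iic.2 (by omega)) (mem_Iic.2 le_rfl) (by omega)
  omega

theorem antitoneOn_Iic_of_succ {s : ℕ} (ha : AntitoneOn a (Iic (s + 1))) :
    AntitoneOn a (Iic s) :=
  ha.mono (Iic_subset_Iic.mpr (Nat.le_succ s))

theorem head?_columnPath {s b : ℕ} (hb : b < a s) :
    (columnPath a s b).head? = some ((s : ℤ), (b : ℤ)) := by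
  obtain ⟨c, hc⟩ : ∃ c, a s - b = c + 1 := ⟨a s - b - 1, by omega⟩
  cases s <;> simp [columnPath, hc, columnSegment_succ]

theorem getLast?_columnPath {s b : ℕ} (ha : AntitoneOn a (Iic s)) (hb : b < a s) :
    (columnPath a s b).getLast? = some (0, ((a 0 - 1 : ℕ) : ℤ)) := by
  induction s generalizing b with
  | zero => rw [columnPath, getLast?_columnSegment (by omega)]; congr 3; omega
  | succ s ih =>
    rw [columnPath, List.getLast?_append,
      ih (antitoneOn_Iic_of_succ ha) (sub_one_lt_of_antitoneOn ha hb)]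
    rfl

theorem isChain_columnPath {s b : ℕ} (ha : AntitoneOn a (Iic s)) (hb : b < a s) :
    (columnPath a s b).IsChain LatticeStep := by
  induction s generalizing b with
  | zero => exact isChain_columnSegment 0 b _
  | succ s ih =>
    have hlt := sub_one_lt_of_antitoneOn ha hb
    refine (isChain_columnSegment _ _ _).append (ih (antitoneOn_Iic_of_succ ha) hlt) ?_
    rw [getLast?_columnSegment (by omega), head?_columnPath hlt]
    rintro _ ⟨⟩ _ ⟨⟩
    left
    simp only [Prod.mk.injEq]
    constructor
    · push_cast; ring
    · congr 1; omega

theorem mem_columnPath {s b : ℕ} (ha : AntitoneOn a (Iic s)) (hb : b < a s) {p : ℤ × ℤ} :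
    p ∈ columnPath a s b ↔ ∃ x y : ℕ, p = ((x : ℤ), (y : ℤ)) ∧ x ≤ s ∧
      (if x = s then b else a (x + 1) - 1) ≤ y ∧ y < a x := by
  induction s generalizing b with
  | zero =>
    simp only [columnPath, mem_columnSegment, nonpos_iff_eq_zero]
    constructor
    · rintro ⟨y, rfl, hy⟩
      exact ⟨0, y, rfl, rfl, by rw [if_pos rfl]; omega⟩
    · rintro ⟨x, y, rfl, rfl, hy⟩
      exact ⟨y, rfl, by rw [if_pos rfl] at hy; omega⟩
  | succ s ih =>
    rw [columnPath, List.mem_append, mem_columnSegment,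
      ih (antitoneOn_Iic_of_succ ha) (sub_one_lt_of_antitoneOn ha hb)]
    constructor
    · rintro (⟨y, rfl, hy⟩ | ⟨x, y, rfl, hx, hy⟩)
      · exact ⟨s + 1, y, rfl, le_rfl, by rw [if_pos rfl]; omega⟩
      · refine ⟨x, y, rfl, by omega, ?_⟩
        split_ifs at hy ⊢ <;> subst_vars <;> omega
    · rintro ⟨x, y, rfl, hx, hy⟩
      rcases (show x = s + 1 ∨ x ≤ s by omega) with rfl | hx
      · exact Or.inl ⟨y, rfl, by rw [if_pos rfl] at hy; omega⟩
      · refine Or.inr ⟨x, y, rfl, hx, ?_⟩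
        split_ifs at hy ⊢ <;> subst_vars <;> omega

theorem top_mem_columnPath {s b k : ℕ} (ha : AntitoneOn a (Iic s)) (hb : b < a s) (hk : k ≤ s) :
    ((k : ℤ), ((a k - 1 : ℕ) : ℤ)) ∈ columnPath a s b := by
  have hsk : a s ≤ a k := ha (mem_Iic.2 hk) (mem_Iic.2 le_rfl) hk
  refine (mem_columnPath ha hb).2 ⟨k, a k - 1, rfl, hk, ?_⟩
  split_ifs with hks
  · subst hks; omega
  · have : a (k + 1) ≤ a k := ha (mem_Iic.2 hk) (mem_Iic.2 (by omega)) (by omega)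
    omega

theorem lt_of_mem_columnPath {s b x y : ℕ} (ha : AntitoneOn a (Iic s)) (hb : b < a s)
    (h : ((x : ℤ), (y : ℤ)) ∈ columnPath a s b) : y < a x := by
  obtain ⟨x', y', hxy, -, -, hy⟩ := (mem_columnPath ha hb).1 h
  simp only [Prod.mk.injEq, Nat.cast_inj] at hxy
  rwa [hxy.1, hxy.2]

theorem le_of_columnPath_eq {s b : ℕ} (ha : AntitoneOn a (Iic s)) (hb : b < a s)
    (ha' : AntitoneOn a' (Iic s)) (hb' : b < a' s)
    (h : columnPath a s b = columnPath a' s b) {k : ℕ} (hk : k ≤ s) : a k ≤ a' k := by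
  have hsk : a s ≤ a k := ha (mem_Iic.2 hk) (mem_Iic.2 le_rfl) hk
  have := lt_of_mem_columnPath ha' hb' (h ▸ top_mem_columnPath ha hb hk)
  omega

theorem eqOn_of_columnPath_eq {s b : ℕ} (ha : AntitoneOn a (Iic s)) (hb : b < a s)
    (ha' : AntitoneOn a' (Iic s)) (hb' : b < a' s)
    (h : columnPath a s b = columnPath a' s b) : ∀ k ≤ s, a k = a' k := fun _ hk =>
  (le_of_columnPath_eq ha hb ha' hb' h hk).antisymm (le_of_columnPath_eq ha' hb' ha hb h.symm hk)

theorem columnPath_disjoint {s t : ℕ} (hst : s < t) (ha : AntitoneOn a (Iic s)) (hs : 0 < a s)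
    (ha' : AntitoneOn a' (Iic t)) (ht : 0 < a' t) (h : ∀ k ≤ s, a k < a' (k + 1)) :
    (columnPath a s 0).Disjoint (columnPath a' t 0) := by
  intro p hp hp'
  obtain ⟨x, y, rfl, hx, -, hy⟩ := (mem_columnPath ha hs).1 hp
  obtain ⟨x', y', hxy, -, hy', -⟩ := (mem_columnPath ha' ht).1 hp'
  simp only [Prod.mk.injEq, Nat.cast_inj] at hxy
  obtain ⟨rfl, rfl⟩ := hxy
  rw [if_neg (by omega)] at hy'
  have := h x hx
  omega

theorem lt_of_columnPath_disjoint {s t : ℕ} (hst : s < t) (ha : AntitoneOn a (Iic s))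
    (hs : 0 < a s) (ha' : AntitoneOn a' (Iic t)) (ht : 0 < a' t) (h0 : a 0 < a' 0)
    (hd : (columnPath a s 0).Disjoint (columnPath a' t 0)) : ∀ k ≤ s, a k < a' (k + 1) := by
  -- The top point `(k, a k - 1)` of column `k` of the first path is not on the second path.
  have avoid : ∀ k ≤ s, a k < a' (k + 1) ∨ a' k < a k := by
    intro k hk
    by_contra! hcon
    have hsk : a s ≤ a k := ha (mem_Iic.2 hk) (mem_Iic.2 le_rfl) hk
    refine hd (top_mem_columnPath ha hs hk) ((mem_columnPath ha' ht).2 ⟨k, a k - 1, rfl, ?_⟩)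
    rw [if_neg (by omega)]
    omega
  intro k hk
  induction k with
  | zero => exact (avoid 0 hk).resolve_right (by omega)
  | succ k ih =>
    have : a (k + 1) ≤ a k := ha (mem_Iic.2 (by omega)) (mem_Iic.2 hk) (by omega)
    exact (avoid (k + 1) hk).resolve_right (by have := ih (by omega); omega)

theorem fst_getLast_le_fst_head : ∀ {L : List (ℤ × ℤ)} {p q : ℤ × ℤ},
    L.IsChain LatticeStep → L.head? = some p → L.getLast? = some q → q.1 ≤ p.1
  | [], _, _, _, hp, _ => by simp at hp
  | [r], _, _, _, hp, hq => by simp_all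
  | r :: r' :: t, p, q, hc, hp, hq => by
    rw [List.isChain_cons_cons] at hc
    simp only [List.head?_cons, Option.some.injEq] at hp
    subst hp
    have := fst_getLast_le_fst_head hc.2 rfl (by rwa [List.getLast?_cons_cons] at hq)
    rcases hc.1 with rfl | rfl <;> simp only at this ⊢ <;> omega

theorem antitoneOn_update_succ {s v : ℕ} (ha : AntitoneOn a (Iic s)) (hv : v ≤ a s) :
    AntitoneOn (Function.update a (s + 1) v) (Iic (s + 1)) := by
  refine antitoneOn_of_add_one_le ordConnected_Iic fun k _ _ hk => ?_
  rw [mem_Iic] at hk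
  rw [Function.update_of_ne (show k ≠ s + 1 by omega)]
  rcases Nat.lt_or_ge (k + 1) (s + 1) with h | h
  · rw [Function.update_of_ne h.ne]
    exact ha (mem_Iic.2 (by omega)) (mem_Iic.2 (by omega)) (by omega)
  · obtain rfl : k = s := by omega
    rwa [Function.update_self]

theorem exists_eq_columnPath : ∀ {L : List (ℤ × ℤ)} {s b e : ℕ}, L.IsChain LatticeStep →
    L.head? = some ((s : ℤ), (b : ℤ)) → L.getLast? = some (0, (e : ℤ)) →
    ∃ a : ℕ → ℕ, AntitoneOn a (Iic s) ∧ b < a s ∧ a 0 = e + 1 ∧ L = columnPath a s b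
  | [], _, _, _, _, hh, _ => by simp at hh
  | [p], s, b, e, _, hh, hl => by
    simp only [List.head?_cons, List.getLast?_singleton, Option.some.injEq] at hh hl
    obtain ⟨hs, hbe⟩ := Prod.mk.injEq _ _ _ _ ▸ hh.symm.trans hl
    obtain ⟨rfl, rfl⟩ : s = 0 ∧ b = e := ⟨by exact_mod_cast hs, by exact_mod_cast hbe⟩
    refine ⟨fun _ => b + 1, antitoneOn_const, Nat.lt_succ_self b, rfl, ?_⟩
    rw [columnPath_zero_of_eq (a := fun _ => b + 1) rfl, hl]
  | p :: q :: t, s, b, e, hc, hh, hl => by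
    rw [List.isChain_cons_cons] at hc
    simp only [List.head?_cons, Option.some.injEq] at hh
    subst hh
    rw [List.getLast?_cons_cons] at hl
    rcases hc.1 with rfl | rfl
    · obtain ⟨s, rfl⟩ : ∃ s', s = s' + 1 := by
        have := fst_getLast_le_fst_head hc.2 rfl hl
        exact ⟨s - 1, by simp only at this; omega⟩
      obtain ⟨a, ha, hb, h0, heq⟩ :=
        exists_eq_columnPath (s := s) (b := b) hc.2 (by simp) hl
      refine ⟨Function.update a (s + 1) (b + 1), antitoneOn_update_succ ha hb, by simp,
        by simpa using h0, ?_⟩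
      rw [columnPath_succ_eq_cons_of_eq (by simp),
        columnPath_congr (a' := a) (fun k hk => Function.update_of_ne (by omega) _ _), ← heq]
    · obtain ⟨a, ha, hb, h0, heq⟩ :=
        exists_eq_columnPath (s := s) (b := b + 1) hc.2 (by simp) hl
      refine ⟨a, ha, by omega, h0, ?_⟩
      rw [columnPath_eq_cons_of_lt hb, ← heq]

end ColumnPath

/-- The rows of a column strict shifted plane partition of class `c`, indexed by their length
minus one: `S` is the set of indices that occur and `row i` is the row of length `i + 1`, padded
with zeros. -/
@[ext]
structure RowFamily (c n : ℕ) where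
  S : Finset (Fin n)
  row : Fin n → ℕ → ℕ
  row_zero : ∀ i ∈ S, row i 0 = c + i + 1
  row_last_pos : ∀ i ∈ S, 0 < row i i
  row_antitone : ∀ i ∈ S, AntitoneOn (row i) (Iic (i : ℕ))
  row_eq_zero : ∀ i k, (i ∉ S ∨ (i : ℕ) < k) → row i k = 0
  row_lt_row_succ : ∀ i ∈ S, ∀ j ∈ S, (i : ℕ) < j → ∀ k ≤ (i : ℕ), row i k < row j (k + 1)

namespace RowFamily

variable {c n : ℕ}

theorem ext_of_eqOn {F G : RowFamily c n} (hS : F.S = G.S)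
    (hrow : ∀ i ∈ F.S, ∀ k ≤ (i : ℕ), F.row i k = G.row i k) : F = G := by
  refine RowFamily.ext hS (funext₂ fun i k => ?_)
  by_cases hi : i ∈ F.S
  · by_cases hk : k ≤ (i : ℕ)
    · exact hrow i hi k hk
    · rw [F.row_eq_zero i k (.inr (by omega)), G.row_eq_zero i k (.inr (by omega))]
  · rw [F.row_eq_zero i k (.inl hi), G.row_eq_zero i k (.inl (hS ▸ hi))]

end RowFamily

namespace CSSPP

variable {c n : ℕ} (P : CSSPP c n)

theorem len_strictAntiOn : StrictAntiOn P.len (Iio P.rows) :=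
  strictAntiOn_of_add_one_lt ordConnected_Iio fun r _ _ hr => P.len_strict r hr

theorem part_lt_part_succ {r r' k : ℕ} (hrr : r < r') (hr' : r' < P.rows) (hk : k < P.len r') :
    P.part r' k < P.part r (k + 1) := by
  induction r', hrr using Nat.le_induction with
  | base => exact P.col_strict_dec r k hr' hk
  | succ r' hrr' ih =>
    have hlen : P.len (r' + 1) < P.len r' := P.len_strict r' hr'
    calc P.part (r' + 1) k < P.part r' (k + 1) := P.col_strict_dec r' k hr' hk
      _ ≤ P.part r' k := P.row_weak_dec r' k (by omega) (by omega)
      _ < P.part r (k + 1) := ih (by omega) (by omega)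

theorem len_le {r : ℕ} (hr : r < P.rows) : P.len r ≤ n :=
  (P.len_strictAntiOn.antitoneOn (mem_Iio.2 (by omega)) (mem_Iio.2 hr) (Nat.zero_le r)).trans
    (P.first_row_le (by omega))

def rowIndex (r : Fin P.rows) : Fin n :=
  ⟨P.len r - 1, by have := P.len_le r.isLt; have := P.len_pos r r.isLt; omega⟩

theorem len_eq_rowIndex_add_one (r : Fin P.rows) : P.len r = P.rowIndex r + 1 := by
  have := P.len_pos r r.isLt
  simp only [rowIndex]
  omega

theorem rowIndex_strictAnti : StrictAnti P.rowIndex := fun r r' h => by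
  have := P.len_strictAntiOn (mem_Iio.2 r.isLt) (mem_Iio.2 r'.isLt) h
  rw [Fin.lt_def, ← Nat.add_lt_add_iff_right, ← len_eq_rowIndex_add_one,
    ← len_eq_rowIndex_add_one]
  exact this

noncomputable def rowOfIndex (i : Fin n) : ℕ → ℕ :=
  if h : ∃ r, P.rowIndex r = i then P.part h.choose else 0

theorem rowOfIndex_rowIndex (r : Fin P.rows) : P.rowOfIndex (P.rowIndex r) = P.part r := by
  have h : ∃ r', P.rowIndex r' = P.rowIndex r := ⟨r, rfl⟩
  rw [rowOfIndex, dif_pos h, P.rowIndex_strictAnti.injective h.choose_spec]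

noncomputable def toRowFamily : RowFamily c n where
  S := Finset.univ.image P.rowIndex
  row := P.rowOfIndex
  row_zero i hi := by
    obtain ⟨r, -, rfl⟩ := Finset.mem_image.1 hi
    rw [rowOfIndex_rowIndex, P.class_eq r r.isLt, len_eq_rowIndex_add_one]
    ring
  row_last_pos i hi := by
    obtain ⟨r, -, rfl⟩ := Finset.mem_image.1 hi
    rw [rowOfIndex_rowIndex]
    exact P.part_pos r _ r.isLt (by rw [len_eq_rowIndex_add_one]; omega)
  row_antitone i hi := by
    obtain ⟨r, -, rfl⟩ := Finset.mem_image.1 hi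
    rw [rowOfIndex_rowIndex]
    refine antitoneOn_of_add_one_le ordConnected_Iic fun k _ _ hk => ?_
    rw [mem_Iic] at hk
    exact P.row_weak_dec r k r.isLt (by rw [len_eq_rowIndex_add_one]; omega)
  row_eq_zero i k hik := by
    by_cases hi : ∃ r, P.rowIndex r = i
    · obtain ⟨r, rfl⟩ := hi
      rw [rowOfIndex_rowIndex]
      refine P.part_eq_zero r k fun h => ?_
      rcases hik with hik | hik
      · exact hik (Finset.mem_image_of_mem _ (Finset.mem_univ r))
      · have := P.len_eq_rowIndex_add_one r
        omega
    · rw [rowOfIndex, dif_neg hi]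
      rfl
  row_lt_row_succ i hi j hj hij k hk := by
    obtain ⟨r, -, rfl⟩ := Finset.mem_image.1 hi
    obtain ⟨r', -, rfl⟩ := Finset.mem_image.1 hj
    rw [rowOfIndex_rowIndex, rowOfIndex_rowIndex]
    exact P.part_lt_part_succ (P.rowIndex_strictAnti.lt_iff_gt.1 hij) r.isLt
      (by rw [len_eq_rowIndex_add_one]; omega)

end CSSPP

namespace RowFamily

variable {c n : ℕ} (F : RowFamily c n)

theorem row_pos {i : Fin n} (hi : i ∈ F.S) {k : ℕ} (hk : k ≤ (i : ℕ)) : 0 < F.row i k :=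
  (F.row_last_pos i hi).trans_le
    (F.row_antitone i hi (mem_Iic.2 hk) (mem_Iic.2 le_rfl) hk)

def rowIndex (r : Fin F.S.card) : Fin n :=
  F.S.orderEmbOfFin rfl r.rev

theorem rowIndex_mem (r : Fin F.S.card) : F.rowIndex r ∈ F.S :=
  F.S.orderEmbOfFin_mem rfl _

theorem rowIndex_strictAnti : StrictAnti F.rowIndex :=
  (F.S.orderEmbOfFin rfl).strictMono.comp_strictAnti Fin.rev_strictAnti

theorem image_rowIndex : Finset.univ.image F.rowIndex = F.S := by
  ext i
  simp only [Finset.mem_image, Finset.mem_univ, true_and]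
  refine ⟨fun ⟨r, hr⟩ => hr ▸ F.rowIndex_mem r, fun hi => ?_⟩
  obtain ⟨t, ht⟩ : i ∈ Set.range (F.S.orderEmbOfFin rfl) := by
    rwa [Finset.range_orderEmbOfFin]
  exact ⟨t.rev, by rw [rowIndex, Fin.rev_rev, ht]⟩

theorem rowIndex_eq_of_strictAnti {f : Fin F.S.card → Fin n} (hf : ∀ r, f r ∈ F.S)
    (hanti : StrictAnti f) : F.rowIndex = f := by
  have h := Finset.orderEmbOfFin_unique rfl (fun r => hf r.rev) (hanti.comp Fin.rev_strictAnti)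
  funext r
  rw [rowIndex, ← h]
  exact congrArg f (Fin.rev_rev r)

def toCSSPP : CSSPP c n where
  rows := F.S.card
  len r := if h : r < F.S.card then F.rowIndex ⟨r, h⟩ + 1 else 0
  part r k := if h : r < F.S.card then F.row (F.rowIndex ⟨r, h⟩) k else 0
  len_strict r h := by
    rw [dif_pos h, dif_pos (by omega)]
    exact Nat.add_lt_add_right (F.rowIndex_strictAnti (Fin.mk_lt_mk.2 (Nat.lt_succ_self r))) 1
  len_pos r h := by
    rw [dif_pos h]
    omega
  first_row_le h := by
    rw [dif_pos h]
    exact (F.rowIndex _).isLt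
  part_pos r k h hk := by
    rw [dif_pos h] at hk ⊢
    exact F.row_pos (i := F.rowIndex ⟨r, h⟩) (F.rowIndex_mem _) (by omega)
  row_weak_dec r k h hk := by
    simp only [dif_pos h] at hk ⊢
    exact F.row_antitone _ (F.rowIndex_mem ⟨r, h⟩) (mem_Iic.2 (by omega))
      (mem_Iic.2 (by omega)) (Nat.le_succ k)
  col_strict_dec r k h hk := by
    rw [dif_pos h] at hk
    rw [dif_pos h, dif_pos (by omega)]
    exact F.row_lt_row_succ _ (F.rowIndex_mem ⟨r + 1, h⟩) _ (F.rowIndex_mem ⟨r, by omega⟩)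
      (F.rowIndex_strictAnti (Fin.mk_lt_mk.2 (by omega : r < r + 1))) k (by omega)
  class_eq r h := by
    rw [dif_pos h, dif_pos h, F.row_zero _ (F.rowIndex_mem _)]
    ring
  len_eq_zero r h := dif_neg (by omega)
  part_eq_zero r k h := by
    by_cases hr : r < F.S.card
    · rw [dif_pos hr] at h ⊢
      exact F.row_eq_zero _ _ (.inr (by simp only [hr, true_and] at h; omega))
    · exact dif_neg hr

theorem toCSSPP_len (r : Fin F.S.card) : F.toCSSPP.len r = F.rowIndex r + 1 :=
  dif_pos r.isLt

theorem toCSSPP_part (r : Fin F.S.card) (k : ℕ) :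
    F.toCSSPP.part r k = F.row (F.rowIndex r) k :=
  dif_pos r.isLt

theorem toCSSPP_rowIndex : F.toCSSPP.rowIndex = F.rowIndex := by
  funext r
  ext
  exact congrArg (· - 1) (F.toCSSPP_len r)

end RowFamily

namespace CSSPP

variable {c n : ℕ} (P : CSSPP c n)

theorem card_toRowFamily_S : P.toRowFamily.S.card = P.rows := by
  rw [toRowFamily, Finset.card_image_of_injective _ P.rowIndex_strictAnti.injective,
    Finset.card_univ, Fintype.card_fin]

theorem toRowFamily_rowIndex (r : Fin P.toRowFamily.S.card) :
    P.toRowFamily.rowIndex r = P.rowIndex (Fin.cast P.card_toRowFamily_S r) := by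
  have h := P.toRowFamily.rowIndex_eq_of_strictAnti
    (fun r => Finset.mem_image_of_mem _ (Finset.mem_univ (Fin.cast P.card_toRowFamily_S r)))
    (fun _ _ h => P.rowIndex_strictAnti h)
  exact congrFun h r

end CSSPP

noncomputable def cssppEquivRowFamily (c n : ℕ) : CSSPP c n ≃ RowFamily c n where
  toFun := CSSPP.toRowFamily
  invFun := RowFamily.toCSSPP
  left_inv P := by
    have hcard := P.card_toRowFamily_S
    refine CSSPP.ext hcard (funext fun r => ?_) (funext₂ fun r k => ?_)
    · by_cases hr : r < P.rows
      · refine (P.toRowFamily.toCSSPP_len ⟨r, hcard ▸ hr⟩).trans ?_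
        rw [P.toRowFamily_rowIndex, P.len_eq_rowIndex_add_one ⟨r, hr⟩]
        rfl
      · rw [P.len_eq_zero r (not_lt.1 hr)]
        exact dif_neg (by omega)
    · by_cases hr : r < P.rows
      · refine (P.toRowFamily.toCSSPP_part ⟨r, hcard ▸ hr⟩ k).trans ?_
        rw [P.toRowFamily_rowIndex]
        exact congrFun (P.rowOfIndex_rowIndex ⟨r, hr⟩) k
      · rw [P.part_eq_zero r k fun h => hr h.1]
        exact dif_neg (by omega)
  right_inv F := by
    refine RowFamily.ext_of_eqOn ?_ fun i hi k _ => ?_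
    · exact (congrArg (Finset.univ.image ·) F.toCSSPP_rowIndex).trans F.image_rowIndex
    · obtain ⟨r, -, rfl⟩ := Finset.mem_image.1 hi
      show F.toCSSPP.rowOfIndex (F.toCSSPP.rowIndex r) k = F.row (F.toCSSPP.rowIndex r) k
      rw [CSSPP.rowOfIndex_rowIndex, F.toCSSPP_rowIndex]
      exact F.toCSSPP_part r k

namespace RowFamily

variable {c n : ℕ}

theorem columnPath_disjoint (F : RowFamily c n) {i j : Fin n} (hi : i ∈ F.S) (hj : j ∈ F.S)
    (hij : i ≠ j) : (columnPath (F.row i) i 0).Disjoint (columnPath (F.row j) j 0) := by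
  rcases lt_or_gt_of_ne (Fin.val_ne_of_ne hij) with h | h
  · exact _root_.columnPath_disjoint h (F.row_antitone i hi) (F.row_last_pos i hi)
      (F.row_antitone j hj) (F.row_last_pos j hj) (F.row_lt_row_succ i hi j hj h)
  · exact (_root_.columnPath_disjoint h (F.row_antitone j hj) (F.row_last_pos j hj)
      (F.row_antitone i hi) (F.row_last_pos i hi) (F.row_lt_row_succ j hj i hi h)).symm

def toNILP (F : RowFamily c n) : NILP n (c + 1) where
  S := F.S
  path i := if i ∈ F.S then columnPath (F.row i) i 0 else []
  path_nil _ hi := if_neg hi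
  steps i hi := by
    rw [if_pos hi]
    exact isChain_columnPath (F.row_antitone i hi) (F.row_last_pos i hi)
  head_eq i hi := by
    rw [if_pos hi, head?_columnPath (F.row_last_pos i hi)]
    rfl
  last_eq i hi := by
    rw [if_pos hi, getLast?_columnPath (F.row_antitone i hi) (F.row_last_pos i hi),
      F.row_zero i hi, Nat.add_sub_cancel]
    push_cast
    ring_nf
  nonintersecting i hi j hj hij := by
    rw [if_pos hi, if_pos hj]
    exact F.columnPath_disjoint hi hj hij

theorem toNILP_path {F : RowFamily c n} {i : Fin n} (hi : i ∈ F.S) :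
    F.toNILP.path i = columnPath (F.row i) i 0 :=
  if_pos hi

end RowFamily

namespace NILP

variable {c n : ℕ}

theorem exists_heights (N : NILP n (c + 1)) {i : Fin n} (hi : i ∈ N.S) :
    ∃ a : ℕ → ℕ, AntitoneOn a (Iic (i : ℕ)) ∧ 0 < a i ∧ a 0 = c + i + 1 ∧
      (∀ k, (i : ℕ) < k → a k = 0) ∧ N.path i = columnPath a i 0 := by
  obtain ⟨a, ha, hpos, h0, hpath⟩ := exists_eq_columnPath (e := c + i) (N.steps i hi)
    (by rw [N.head_eq i hi]; rfl) (by rw [N.last_eq i hi]; push_cast; ring_nf)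
  have hEq : EqOn a (fun k => if k ≤ (i : ℕ) then a k else 0) (Iic (i : ℕ)) :=
    fun k hk => (if_pos (mem_Iic.1 hk)).symm
  refine ⟨fun k => if k ≤ (i : ℕ) then a k else 0, ha.congr hEq, by simpa using hpos,
    by simpa using h0, fun k hk => if_neg (by omega), ?_⟩
  rw [hpath]
  exact columnPath_congr (fun k hk => hEq (mem_Iic.2 hk)) 0

noncomputable def heights (N : NILP n (c + 1)) (i : Fin n) (hi : i ∈ N.S) : ℕ → ℕ :=
  (N.exists_heights hi).choose

variable (N : NILP n (c + 1)) {i : Fin n} (hi : i ∈ N.S)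

theorem heights_antitoneOn : AntitoneOn (N.heights i hi) (Iic (i : ℕ)) :=
  (N.exists_heights hi).choose_spec.1

theorem heights_last_pos : 0 < N.heights i hi i :=
  (N.exists_heights hi).choose_spec.2.1

theorem heights_zero : N.heights i hi 0 = c + i + 1 :=
  (N.exists_heights hi).choose_spec.2.2.1

theorem heights_eq_zero {k : ℕ} (hk : (i : ℕ) < k) : N.heights i hi k = 0 :=
  (N.exists_heights hi).choose_spec.2.2.2.1 k hk

theorem path_eq_columnPath_heights : N.path i = columnPath (N.heights i hi) i 0 :=
  (N.exists_heights hi).choose_spec.2.2.2.2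

noncomputable def toRowFamily : RowFamily c n where
  S := N.S
  row i := if hi : i ∈ N.S then N.heights i hi else 0
  row_zero i hi := by
    rw [dif_pos hi]
    exact N.heights_zero hi
  row_last_pos i hi := by
    rw [dif_pos hi]
    exact N.heights_last_pos hi
  row_antitone i hi := by
    rw [dif_pos hi]
    exact N.heights_antitoneOn hi
  row_eq_zero i k hik := by
    by_cases hi : i ∈ N.S
    · rw [dif_pos hi]
      exact N.heights_eq_zero hi (hik.resolve_left (not_not.2 hi))
    · rw [dif_neg hi]
      rfl
  row_lt_row_succ i hi j hj hij := by
    rw [dif_pos hi, dif_pos hj]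
    refine lt_of_columnPath_disjoint hij (N.heights_antitoneOn hi) (N.heights_last_pos hi)
      (N.heights_antitoneOn hj) (N.heights_last_pos hj)
      (by rw [N.heights_zero hi, N.heights_zero hj]; omega) ?_
    rw [← N.path_eq_columnPath_heights hi, ← N.path_eq_columnPath_heights hj]
    exact N.nonintersecting i hi j hj (Fin.ne_of_val_ne hij.ne)

theorem toRowFamily_row : N.toRowFamily.row i = N.heights i hi :=
  dif_pos hi

end NILP

noncomputable def rowFamilyEquivNILP (c n : ℕ) : RowFamily c n ≃ NILP n (c + 1) where
  toFun := RowFamily.toNILP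
  invFun := NILP.toRowFamily
  left_inv F := by
    refine RowFamily.ext_of_eqOn rfl fun i (hi : i ∈ F.S) k hk => ?_
    rw [NILP.toRowFamily_row _ hi]
    refine eqOn_of_columnPath_eq (NILP.heights_antitoneOn _ hi) (NILP.heights_last_pos _ hi)
      (F.row_antitone i hi) (F.row_last_pos i hi) ?_ k hk
    exact (F.toNILP.path_eq_columnPath_heights hi).symm.trans (RowFamily.toNILP_path hi)
  right_inv N := by
    refine NILP.ext rfl (funext fun i => ?_)
    by_cases hi : i ∈ N.S
    · rw [RowFamily.toNILP_path hi, NILP.toRowFamily_row _ hi, N.path_eq_columnPath_heights hi]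
    · rw [N.path_nil i hi]
      exact if_neg hi

/-- column strict shifted plane partitions of class `l-1` with at most `n`
parts in the first row are in bijection with families of nonintersecting lattice paths with
starting points a subset of `{(i,0) : 0 ≤ i ≤ n-1}` and endpoints the corresponding subset
of `{(0, i+l-1) : 0 ≤ i ≤ n-1}`. -/
theorem csspp_equiv_nonintersecting_lattice_paths (n l : ℕ) (hl : 2 ≤ l) :
    Nonempty (CSSPP (l - 1) n ≃ NILP n l) := by
  obtain ⟨c, rfl⟩ : ∃ c, l = c + 1 := ⟨l - 1, by omega⟩
  exact ⟨(cssppEquivRowFamily c n).trans (rowFamilyEquivNILP c n)⟩
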